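/- arXiv:1406.5764 — 3 statements merged into one kernel-verified Lean document; each statement's English description precedes it below -/
import Mathlib

section
/- Let T > 0, x ∈ ℝ^d, and let b : ℝ^d → ℝ^d be Lipschitz continuous. Then the Freidlin–Wentzell rate functional I_T^x is lower semicontinuous on C([0,T]; ℝ^d) equipped with the supremum metric: for every sequence φ_n → φ uniformly on [0,T], liminf_{n→∞} I_T^x(φ_n) ≥ I_T^x(φ). -/
/-!
Fix `ε > 0` and pass to a subsequence along which `I(φₙ) < liminf + ε`. Each `φₙ` is then
`x + ∫ (hₙ + b ∘ φₙ)` with controls `hₙ` bounded in `L²(0,T)`, so by Banach–Alaoglu they have a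
weak cluster point `h` with `½ ‖h‖² ≤ liminf + ε`. Testing against indicators of `(0,t]` shows
that `∫₀ᵗ h` is the limit of `φₙ(t) - x - ∫₀ᵗ b ∘ φₙ`, which by uniform convergence is
`φ(t) - x - ∫₀ᵗ b ∘ φ`. Hence `h + b ∘ φ` is an admissible derivative of `φ`.
-/

open MeasureTheory Filter

/-- The Freidlin–Wentzell rate functional `I_T^x` on paths `φ : ℝ → ℝ^d`
(only the values of `φ` on `[0,T]` are relevant).  It equals
`(1/2) ∫₀^T ‖φ̇(s) − b(φ(s))‖² ds` if `φ(0) = x` and `φ` is in `H¹`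
(i.e. `φ` is the integral of a square-integrable function `g = φ̇` on `[0,T]`),
and `∞` otherwise (the infimum of the empty set in `ℝ≥0∞` is `∞`;
since `φ̇` is a.e. unique, the set below is a singleton when nonempty). -/
noncomputable def FWrate (d : ℕ) (b : EuclideanSpace ℝ (Fin d) → EuclideanSpace ℝ (Fin d))
    (T : ℝ) (x : EuclideanSpace ℝ (Fin d)) (φ : ℝ → EuclideanSpace ℝ (Fin d)) : ENNReal :=
  sInf {c : ENNReal | ∃ g : ℝ → EuclideanSpace ℝ (Fin d),
    MeasureTheory.IntegrableOn g (Set.Icc 0 T) ∧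
    MeasureTheory.IntegrableOn (fun s => ‖g s‖ ^ 2) (Set.Icc 0 T) ∧
    (∀ t ∈ Set.Icc (0 : ℝ) T, φ t = φ 0 + ∫ s in (0 : ℝ)..t, g s) ∧
    φ 0 = x ∧
    c = ENNReal.ofReal ((1 / 2) * ∫ s in (0 : ℝ)..T, ‖g s - b (φ s)‖ ^ 2)}

open Set Topology
open scoped InnerProductSpace

theorem exists_norm_le_inner_eq_of_tendsto_inner {𝕜 E ι : Type*} [RCLike 𝕜]
    [NormedAddCommGroup E] [InnerProductSpace 𝕜 E] [CompleteSpace E]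
    {l : Filter ι} [l.NeBot] {H : ι → E} {C : ℝ} (hH : ∀ i, ‖H i‖ ≤ C) :
    ∃ h : E, ‖h‖ ≤ C ∧ ∀ v : E, ∀ a : 𝕜,
      Tendsto (fun i => ⟪H i, v⟫_𝕜) l (𝓝 a) → ⟪h, v⟫_𝕜 = a := by
  -- Any weak-* cluster point of the Riesz representatives of the `H i` will do.
  let u : ι → WeakDual 𝕜 E := fun i => StrongDual.toWeakDual (InnerProductSpace.toDual 𝕜 E (H i))
  have hu : map u l ≤ 𝓟 (WeakDual.toStrongDual ⁻¹' Metric.closedBall 0 C) :=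
    le_principal_iff.mpr <| eventually_map.mpr <| .of_forall fun i => by simpa [u] using hH i
  obtain ⟨ℓ, hℓC, hℓ⟩ := (WeakDual.isCompact_closedBall 0 C).exists_mapClusterPt hu
  refine ⟨(InnerProductSpace.toDual 𝕜 E).symm ℓ.toStrongDual, by simpa using hℓC,
    fun v a hv => ?_⟩
  rw [InnerProductSpace.toDual_symm_apply]
  have hev : MapClusterPt (ℓ v) l (fun i => ⟪H i, v⟫_𝕜) :=
    hℓ.tendsto_comp (WeakDual.eval_continuous v).continuousAt
  exact eq_of_nhds_neBot (hev.clusterPt.mono hv)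

theorem MeasureTheory.MemLp.norm_toLp_two_sq {α E : Type*} {m : MeasurableSpace α}
    {μ : Measure α} [NormedAddCommGroup E] [InnerProductSpace ℝ E] {f : α → E}
    (hf : MemLp f 2 μ) :
    ‖hf.toLp f‖ ^ 2 = ∫ a, ‖f a‖ ^ 2 ∂μ := by
  rw [← real_inner_self_eq_norm_sq, L2.inner_def]
  refine integral_congr_ae ?_
  filter_upwards [hf.coeFn_toLp] with a ha
  rw [ha, real_inner_self_eq_norm_sq]

section Interval

variable {E : Type*} [NormedAddCommGroup E] {a b t : ℝ}

theorem MeasureTheory.IntegrableOn.intervalIntegrable_of_mem_Icc {f : ℝ → E}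
    (hf : IntegrableOn f (Icc a b)) (ht : t ∈ Icc a b) : IntervalIntegrable f volume a t := by
  refine IntegrableOn.intervalIntegrable ?_
  rw [uIcc_of_le ht.1]
  exact hf.mono_set (Icc_subset_Icc_right ht.2)

theorem ContinuousOn.memLp_restrict_Icc {f : ℝ → E} (hf : ContinuousOn f (Icc a b))
    (p : ENNReal) : MemLp f p (volume.restrict (Icc a b)) := by
  obtain ⟨C, hC⟩ := isCompact_Icc.exists_bound_of_continuousOn hf
  exact .of_bound (hf.aestronglyMeasurable measurableSet_Icc) C
    ((ae_restrict_iff' measurableSet_Icc).mpr (.of_forall hC))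

variable [NormedSpace ℝ E]

theorem intervalIntegral_eq_setIntegral_restrict_Icc {f : ℝ → E} (ht : t ∈ Icc a b) :
    ∫ s in a..t, f s = ∫ s in Ioc a t, f s ∂(volume.restrict (Icc a b)) := by
  rw [intervalIntegral.integral_of_le ht.1, Measure.restrict_restrict measurableSet_Ioc,
    inter_eq_self_of_subset_left (Ioc_subset_Icc_self.trans (Icc_subset_Icc_right ht.2))]

theorem intervalIntegral_eq_integral_restrict_Icc {f : ℝ → E} (hab : a ≤ b) :
    ∫ s in a..b, f s = ∫ s, f s ∂(volume.restrict (Icc a b)) := by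
  rw [intervalIntegral.integral_of_le hab, integral_Icc_eq_integral_Ioc]

end Interval

theorem exists_memLp_primitive_of_tendsto {E ι : Type*} [NormedAddCommGroup E]
    [InnerProductSpace ℝ E] [CompleteSpace E] {l : Filter ι} [l.NeBot] {T M : ℝ} (hT : 0 ≤ T)
    {h : ι → ℝ → E} {ψ : ℝ → E} (hh : ∀ i, MemLp (h i) 2 (volume.restrict (Icc 0 T)))
    (hM : ∀ i, ∫ s in 0..T, ‖h i s‖ ^ 2 ≤ M)
    (hψ : ∀ t ∈ Icc 0 T, Tendsto (fun i => ∫ s in 0..t, h i s) l (𝓝 (ψ t))) :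
    ∃ g : ℝ → E, MemLp g 2 (volume.restrict (Icc 0 T)) ∧
      (∀ t ∈ Icc 0 T, ψ t = ∫ s in 0..t, g s) ∧ ∫ s in 0..T, ‖g s‖ ^ 2 ≤ M := by
  obtain ⟨i₀⟩ := l.nonempty_of_neBot
  have hM₀ : 0 ≤ M :=
    (intervalIntegral.integral_nonneg hT fun _ _ => sq_nonneg _).trans (hM i₀)
  have hnorm : ∀ i, ‖(hh i).toLp (h i)‖ ≤ √M := fun i =>
    Real.le_sqrt_of_sq_le <| by
      rw [(hh i).norm_toLp_two_sq, ← intervalIntegral_eq_integral_restrict_Icc hT]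
      exact hM i
  obtain ⟨G, hGM, hG⟩ := exists_norm_le_inner_eq_of_tendsto_inner (𝕜 := ℝ) (l := l) hnorm
  refine ⟨G, Lp.memLp G, fun t ht => ?_, ?_⟩
  · have hμ : volume.restrict (Icc 0 T) (Ioc 0 t) ≠ ⊤ := measure_ne_top _ _
    have hind : ∀ (F : Lp E 2 (volume.restrict (Icc 0 T))) (c : E),
        ⟪F, indicatorConstLp 2 measurableSet_Ioc hμ c⟫_ℝ =
          ⟪c, ∫ s in Ioc 0 t, F s ∂(volume.restrict (Icc 0 T))⟫_ℝ := fun F c => by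
      rw [real_inner_comm, L2.inner_indicatorConstLp_eq_inner_setIntegral ℝ measurableSet_Ioc hμ]
    refine ext_inner_left ℝ fun c => ?_
    rw [intervalIntegral_eq_setIntegral_restrict_Icc ht, ← hind, hG _ _]
    refine (tendsto_const_nhds.inner (hψ t ht)).congr fun i => ?_
    rw [hind, intervalIntegral_eq_setIntegral_restrict_Icc ht,
      integral_congr_ae (ae_restrict_of_ae (hh i).coeFn_toLp)]
  · rw [intervalIntegral_eq_integral_restrict_Icc hT, ← (Lp.memLp G).norm_toLp_two_sq,
      Lp.toLp_coeFn]
    calc ‖G‖ ^ 2 ≤ √M ^ 2 := by gcongr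
      _ = M := Real.sq_sqrt hM₀

noncomputable def driftResidual {E : Type*} [NormedAddCommGroup E] [NormedSpace ℝ E]
    (b : E → E) (x : E) (φ : ℝ → E) (t : ℝ) : E :=
  φ t - x - ∫ s in 0..t, b (φ s)

theorem tendsto_driftResidual {E ι : Type*} [NormedAddCommGroup E] [NormedSpace ℝ E]
    {l : Filter ι} [l.IsCountablyGenerated] {b : E → E} (hb : UniformContinuous b) {x : E}
    {φ : ℝ → E} {φn : ι → ℝ → E} {T t : ℝ} (hφn : ∀ i, ContinuousOn (φn i) (Icc 0 T))
    (hconv : TendstoUniformlyOn φn φ l (Icc 0 T)) (ht : t ∈ Icc 0 T) :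
    Tendsto (fun i => driftResidual b x (φn i) t) l (𝓝 (driftResidual b x φ t)) := by
  have hsub : uIcc 0 t ⊆ Icc 0 T := by
    rw [uIcc_of_le ht.1]
    exact Icc_subset_Icc_right ht.2
  refine ((hconv.tendsto_at ht).sub_const x).sub ?_
  exact TendstoUniformlyOn.tendsto_intervalIntegral_of_continuousOn
    (.of_forall fun i => (hb.continuous.comp_continuousOn (hφn i)).mono hsub)
    ((hb.comp_tendstoUniformlyOn hconv).mono hsub)

namespace FWrate

variable {d : ℕ} {b : EuclideanSpace ℝ (Fin d) → EuclideanSpace ℝ (Fin d)} {T : ℝ}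
  {x : EuclideanSpace ℝ (Fin d)} {φ : ℝ → EuclideanSpace ℝ (Fin d)}

theorem le_ofReal_of_driftResidual_eq (hbφ : ContinuousOn (fun s => b (φ s)) (Icc 0 T))
    {h : ℝ → EuclideanSpace ℝ (Fin d)} (hh : MemLp h 2 (volume.restrict (Icc 0 T)))
    (hx : φ 0 = x) (hres : ∀ t ∈ Icc 0 T, driftResidual b x φ t = ∫ s in 0..t, h s) :
    FWrate d b T x φ ≤ ENNReal.ofReal (1 / 2 * ∫ s in 0..T, ‖h s‖ ^ 2) := by
  have hg : MemLp (fun s => h s + b (φ s)) 2 (volume.restrict (Icc 0 T)) :=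
    hh.add (hbφ.memLp_restrict_Icc 2)
  refine sInf_le ⟨_, hg.integrable one_le_two,
    (memLp_two_iff_integrable_sq_norm hg.1).mp hg, fun t ht => ?_, hx,
    by simp only [add_sub_cancel_right]⟩
  rw [intervalIntegral.integral_add
      (IntegrableOn.intervalIntegrable_of_mem_Icc (hh.integrable one_le_two) ht)
      (hbφ.integrableOn_Icc.intervalIntegrable_of_mem_Icc ht),
    ← hres t ht, hx, driftResidual]
  abel

theorem exists_driftResidual_eq_of_lt (hbφ : ContinuousOn (fun s => b (φ s)) (Icc 0 T))
    {c : ENNReal} (hc : FWrate d b T x φ < c) :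
    ∃ h : ℝ → EuclideanSpace ℝ (Fin d), MemLp h 2 (volume.restrict (Icc 0 T)) ∧ φ 0 = x ∧
      (∀ t ∈ Icc 0 T, driftResidual b x φ t = ∫ s in 0..t, h s) ∧
      ENNReal.ofReal (1 / 2 * ∫ s in 0..T, ‖h s‖ ^ 2) < c := by
  obtain ⟨_, ⟨g, hgi, hgsq, hpath, hx, rfl⟩, hlt⟩ := sInf_lt_iff.mp hc
  refine ⟨fun s => g s - b (φ s),
    ((memLp_two_iff_integrable_sq_norm hgi.1).mpr hgsq).sub (hbφ.memLp_restrict_Icc 2), hx,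
    fun t ht => ?_, hlt⟩
  rw [intervalIntegral.integral_sub (hgi.intervalIntegrable_of_mem_Icc ht)
      (hbφ.integrableOn_Icc.intervalIntegrable_of_mem_Icc ht), driftResidual, hpath t ht, hx]
  abel

end FWrate

/-- The Freidlin–Wentzell rate functional is lower semicontinuous on
`C([0,T]; ℝ^d)` with the supremum metric: if `φₙ → φ` uniformly on `[0,T]`,
then `liminf I_T^x(φₙ) ≥ I_T^x(φ)`. -/
theorem fw_rate_lowerSemicontinuous
    (d : ℕ) (T : ℝ) (hT : 0 < T) (x : EuclideanSpace ℝ (Fin d))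
    (b : EuclideanSpace ℝ (Fin d) → EuclideanSpace ℝ (Fin d))
    (K : NNReal) (hb : LipschitzWith K b)
    (φ : ℝ → EuclideanSpace ℝ (Fin d)) (φn : ℕ → ℝ → EuclideanSpace ℝ (Fin d))
    (hφ : ContinuousOn φ (Set.Icc 0 T)) (hφn : ∀ n, ContinuousOn (φn n) (Set.Icc 0 T))
    (hconv : TendstoUniformlyOn φn φ Filter.atTop (Set.Icc 0 T)) :
    FWrate d b T x φ ≤ Filter.liminf (fun n => FWrate d b T x (φn n)) Filter.atTop := by
  refine ENNReal.le_of_forall_pos_le_add fun ε hε hL => ?_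
  set R := liminf (fun n => FWrate d b T x (φn n)) atTop + ε
  have hR : R ≠ ⊤ := ENNReal.add_ne_top.mpr ⟨hL.ne, ENNReal.coe_ne_top⟩
  obtain ⟨u, hu, hlt⟩ := extraction_of_frequently_atTop <|
    frequently_lt_of_liminf_lt (by isBoundedDefault)
      (ENNReal.lt_add_right hL.ne (ENNReal.coe_ne_zero.mpr hε.ne'))
  choose h hh hx hres hval using fun k =>
    FWrate.exists_driftResidual_eq_of_lt (hb.continuous.comp_continuousOn (hφn (u k))) (hlt k)
  have hx₀ : φ 0 = x := tendsto_nhds_unique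
    ((hconv.tendsto_at ⟨le_rfl, hT.le⟩).comp hu.tendsto_atTop) (by simp [Function.comp_def, hx])
  obtain ⟨g, hg, hgres, hgM⟩ := exists_memLp_primitive_of_tendsto (l := atTop)
    (M := 2 * R.toReal) hT.le hh
    (fun k => by linarith [(ENNReal.ofReal_le_iff_le_toReal hR).mp (hval k).le])
    (fun t ht => ((tendsto_driftResidual hb.uniformContinuous hφn hconv ht).comp
      hu.tendsto_atTop).congr fun k => hres k t ht)
  calc FWrate d b T x φ ≤ ENNReal.ofReal (1 / 2 * ∫ s in 0..T, ‖g s‖ ^ 2) :=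
        FWrate.le_ofReal_of_driftResidual_eq (hb.continuous.comp_continuousOn hφ) hg hx₀ hgres
    _ ≤ ENNReal.ofReal R.toReal := ENNReal.ofReal_le_ofReal (by linarith)
    _ = R := ENNReal.ofReal_toReal hR
end

section
/- Let U : ℝ^d → ℝ be continuous, convex, and coercive. Then the family of Gibbs probability measures (μ_ε)_{0 < ε ≤ 1} is tight: for every δ > 0 there exists a compact set K ⊆ ℝ^d such that μ_ε(ℝ^d \ K) ≤ δ for all ε ∈ (0, 1]. -/
open MeasureTheory Filter

/-- The Gibbs measure `μ_ε` on `ℝ^d` with density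
`x ↦ Z_ε⁻¹ exp(−U(x)/ε²)` with respect to Lebesgue measure. -/
noncomputable def gibbs (d : ℕ) (U : EuclideanSpace ℝ (Fin d) → ℝ) (ε : ℝ) :
    Measure (EuclideanSpace ℝ (Fin d)) :=
  (∫⁻ x, ENNReal.ofReal (Real.exp (-U x / ε ^ 2)))⁻¹ •
    MeasureTheory.volume.withDensity (fun x => ENNReal.ofReal (Real.exp (-U x / ε ^ 2)))

open Set Topology
open scoped ENNReal

/-!
Convexity upgrades coercivity to linear growth `U x ≥ c (1 + ‖x‖) - C`, so `exp (-(U - m) / 2)`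
is integrable, where `m = min U`. For `ε ≤ 1` and `R ≥ 1` the Boltzmann weight `exp (-U / ε²)` is
at most `exp (-(m + 1) / ε²) · exp (1 - R / 2) · exp (-(U - m) / 2)` on `{U > m + R}`, while
`Z_ε ≥ exp (-(m + 1) / ε²) · vol {U < m + 1}`. The factor `exp (-(m + 1) / ε²)` cancels, so
`μ_ε {U > m + R} ≤ exp (1 - R / 2) · ∫ exp (-(U - m) / 2) / vol {U < m + 1}` uniformly in `ε`,
and this tends to `0` as `R → ∞`; the sublevel sets `{U ≤ m + R}` are compact.
-/

section LinearGrowth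

variable {E : Type*} [NormedAddCommGroup E] [NormedSpace ℝ E] {f : E → ℝ}

theorem ConvexOn.add_norm_div_le (hf : ConvexOn ℝ univ f) {b : ℝ} (hb : 0 < b)
    (hsphere : ∀ y, ‖y‖ = b → f 0 + 1 ≤ f y) {x : E} (hx : b ≤ ‖x‖) :
    f 0 + ‖x‖ / b ≤ f x := by
  have hx0 : 0 < ‖x‖ := hb.trans_le hx
  set t := b / ‖x‖
  have ht : 0 < t := div_pos hb hx0
  have ht1 : t ≤ 1 := (div_le_one hx0).2 hx
  have hy : f 0 + 1 ≤ f (t • x) := hsphere _ <| by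
    rw [norm_smul, Real.norm_of_nonneg ht.le, div_mul_cancel₀ _ hx0.ne']
  have hconv : f (t • x) ≤ (1 - t) * f 0 + t * f x := by
    simpa using hf.2 (mem_univ 0) (mem_univ x) (sub_nonneg.2 ht1) ht.le (by ring)
  have hinv : 1 / t ≤ f x - f 0 := by
    rw [div_le_iff₀ ht]; nlinarith
  rwa [one_div_div, le_sub_iff_add_le'] at hinv

theorem ConvexOn.exists_mul_one_add_norm_sub_le (hf : ConvexOn ℝ univ f)
    (hbdd : BddBelow (range f)) (hcoer : Tendsto f (Bornology.cobounded E) atTop) :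
    ∃ c > 0, ∃ C, ∀ x, c * (1 + ‖x‖) - C ≤ f x := by
  obtain ⟨m, hm⟩ := hbdd
  have hm' : ∀ x, m ≤ f x := fun x => hm (mem_range_self x)
  obtain ⟨b, hb⟩ : ∃ b, ∀ x : E, b ≤ ‖x‖ → f 0 + 1 < f x := by
    have := hcoer.eventually (eventually_gt_atTop (f 0 + 1))
    rw [← comap_norm_atTop, eventually_comap, eventually_atTop] at this
    obtain ⟨b, hb⟩ := this
    exact ⟨b, fun x hx => hb _ hx x rfl⟩
  set b' := max b 1
  have hb' : 0 < b' := zero_lt_one.trans_le (le_max_right _ _)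
  refine ⟨1 / b', by positivity, 1 / b' + 1 - m, fun x => ?_⟩
  rcases le_or_gt b' ‖x‖ with hx | hx
  · have hgrowth := hf.add_norm_div_le hb' (fun y hy => (hb y (hy ▸ le_max_left _ _)).le) hx
    have hexpand : 1 / b' * (1 + ‖x‖) = 1 / b' + ‖x‖ / b' := by ring
    linarith [hm' 0]
  · have hsmall : 1 / b' * (1 + ‖x‖) < 1 / b' + 1 := by
      rw [mul_add, mul_one, one_div_mul_eq_div, add_lt_add_iff_left, div_lt_one hb']
      exact hx
    linarith [hm' x]

end LinearGrowth

theorem Continuous.isCompact_sublevel {X : Type*} [TopologicalSpace X] {f : X → ℝ}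
    (hf : Continuous f) (hcoer : Tendsto f (cocompact X) atTop) (c : ℝ) :
    IsCompact {x | f x ≤ c} := by
  obtain ⟨K, hK, hKc⟩ := mem_cocompact'.1 (hcoer.eventually (eventually_gt_atTop c))
  exact hK.of_isClosed_subset (isClosed_le hf continuous_const) fun x (hx : f x ≤ c) =>
    hKc hx.not_gt

theorem integrable_exp_neg_mul_one_add_norm {E : Type*} [NormedAddCommGroup E]
    [NormedSpace ℝ E] [FiniteDimensional ℝ E] [MeasurableSpace E] [BorelSpace E]
    (μ : Measure E) [μ.IsAddHaarMeasure] {c : ℝ} (hc : 0 < c) :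
    Integrable (fun x => Real.exp (-c * (1 + ‖x‖))) μ := by
  set r := (Module.finrank ℝ E : ℝ) + 1
  have hdecay : (fun x : E => Real.exp (-c * (1 + ‖x‖))) =O[cocompact E]
      fun x => (1 + ‖x‖) ^ (-r) :=
    ((isLittleO_exp_neg_mul_rpow_atTop hc (-r)).isBigO).comp_tendsto <|
      tendsto_atTop_add_const_left _ _ tendsto_norm_cocompact_atTop
  refine LocallyIntegrable.integrable_of_isBigO_cocompact ?_ hdecay
    ((integrable_one_add_norm (μ := μ) (by simp [r])).integrableAtFilter _)
  exact (by fun_prop : Continuous _).locallyIntegrable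

theorem lintegral_ofReal_exp_neg_lt_top {E : Type*} [NormedAddCommGroup E] [NormedSpace ℝ E]
    [FiniteDimensional ℝ E] [MeasurableSpace E] [BorelSpace E] (μ : Measure E)
    [μ.IsAddHaarMeasure] {g : E → ℝ} {c C : ℝ} (hc : 0 < c)
    (hg : ∀ x, c * (1 + ‖x‖) - C ≤ g x) :
    ∫⁻ x, ENNReal.ofReal (Real.exp (-g x)) ∂μ < ⊤ := by
  refine lt_of_le_of_lt (lintegral_mono fun x => ENNReal.ofReal_le_ofReal ?_)
    (((integrable_exp_neg_mul_one_add_norm μ hc).const_mul (Real.exp C)).lintegral_lt_top)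
  rw [← Real.exp_add]
  gcongr
  linarith [hg x]

section Boltzmann

variable {α : Type*} [MeasurableSpace α] (μ : Measure α) {f : α → ℝ}

theorem ofReal_exp_mul_measure_lt_le_lintegral (hf : Measurable f) (a ε : ℝ) :
    ENNReal.ofReal (Real.exp (-a / ε ^ 2)) * μ {x | f x < a} ≤
      ∫⁻ x, ENNReal.ofReal (Real.exp (-f x / ε ^ 2)) ∂μ := by
  refine (mul_le_mul_right (measure_mono fun x (hx : f x < a) => ?_) _).trans
    (mul_meas_ge_le_lintegral₀ (by fun_prop) _)
  change ENNReal.ofReal _ ≤ ENNReal.ofReal _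
  gcongr

-- With `s = ε⁻² ≥ 1` and `w = y - m ≥ R ≥ 1`: `s (w - 1) ≥ w - 1 ≥ w / 2 + R / 2 - 1`.
theorem neg_div_sq_le_of_add_le {ε R m y : ℝ} (hε : ε ∈ Ioc 0 1) (hR : 1 ≤ R) (hy : m + R ≤ y) :
    -y / ε ^ 2 ≤ -(m + 1) / ε ^ 2 + (1 - R / 2) + -(y - m) / 2 := by
  obtain ⟨hε0, hε1⟩ := hε
  have hs : 1 ≤ (ε ^ 2)⁻¹ := one_le_inv₀ (by positivity) |>.2 (pow_le_one₀ hε0.le hε1)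
  rw [div_eq_mul_inv (-y), div_eq_mul_inv (-(m + 1))]
  nlinarith [mul_le_mul_of_nonneg_left hs (by linarith : 0 ≤ y - m - 1)]

theorem setLIntegral_exp_superlevel_le (hf : Measurable f) {m ε R : ℝ} (hε : ε ∈ Ioc 0 1)
    (hR : 1 ≤ R) :
    ∫⁻ x in {x | m + R < f x}, ENNReal.ofReal (Real.exp (-f x / ε ^ 2)) ∂μ ≤
      ENNReal.ofReal (Real.exp (-(m + 1) / ε ^ 2)) *
        (ENNReal.ofReal (Real.exp (1 - R / 2)) *
          ∫⁻ x, ENNReal.ofReal (Real.exp (-(f x - m) / 2)) ∂μ) := by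
  calc ∫⁻ x in {x | m + R < f x}, ENNReal.ofReal (Real.exp (-f x / ε ^ 2)) ∂μ
      ≤ ∫⁻ x in {x | m + R < f x}, ENNReal.ofReal (Real.exp (-(m + 1) / ε ^ 2)) *
          (ENNReal.ofReal (Real.exp (1 - R / 2)) *
            ENNReal.ofReal (Real.exp (-(f x - m) / 2))) ∂μ := by
        refine setLIntegral_mono' (measurableSet_lt measurable_const hf) fun x hx => ?_
        rw [← ENNReal.ofReal_mul (by positivity), ← ENNReal.ofReal_mul (by positivity),
          ← Real.exp_add, ← Real.exp_add, ← add_assoc]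
        gcongr
        exact neg_div_sq_le_of_add_le hε hR (le_of_lt hx)
    _ ≤ _ := by
      rw [← lintegral_const_mul' _ _ ENNReal.ofReal_ne_top,
        ← lintegral_const_mul' _ _ ENNReal.ofReal_ne_top]
      exact setLIntegral_le_lintegral _ _

end Boltzmann

theorem gibbs_superlevel_le {d : ℕ} {U : EuclideanSpace ℝ (Fin d) → ℝ} (hU : Measurable U)
    {m ε R : ℝ} (hε : ε ∈ Ioc 0 1) (hR : 1 ≤ R) :
    gibbs d U ε {x | m + R < U x} ≤
      ENNReal.ofReal (Real.exp (1 - R / 2)) *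
        (∫⁻ x, ENNReal.ofReal (Real.exp (-(U x - m) / 2))) / volume {x | U x < m + 1} := by
  set a := ENNReal.ofReal (Real.exp (-(m + 1) / ε ^ 2))
  have ha : a ≠ 0 := (ENNReal.ofReal_pos.2 (Real.exp_pos _)).ne'
  rw [gibbs, Measure.smul_apply, smul_eq_mul,
    withDensity_apply _ (measurableSet_lt measurable_const hU)]
  calc _ ≤ (a * volume {x | U x < m + 1})⁻¹ * (a * (ENNReal.ofReal (Real.exp (1 - R / 2)) *
          ∫⁻ x, ENNReal.ofReal (Real.exp (-(U x - m) / 2)))) :=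
        mul_le_mul' (ENNReal.inv_le_inv.2 (ofReal_exp_mul_measure_lt_le_lintegral _ hU _ _))
          (setLIntegral_exp_superlevel_le _ hU hε hR)
    _ = _ := by
      rw [ENNReal.mul_inv (.inl ha) (.inl ENNReal.ofReal_ne_top), mul_mul_mul_comm,
        ENNReal.inv_mul_cancel ha ENNReal.ofReal_ne_top, one_mul, mul_comm]
      exact (div_eq_mul_inv _ _).symm

theorem tendsto_ofReal_exp_one_sub_half_atTop :
    Tendsto (fun R : ℝ => ENNReal.ofReal (Real.exp (1 - R / 2))) atTop (𝓝 0) := by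
  rw [← ENNReal.ofReal_zero]
  refine ENNReal.tendsto_ofReal (Real.tendsto_exp_atBot.comp ?_)
  simpa [sub_eq_add_neg] using
    tendsto_atBot_add_const_left _ 1
      (tendsto_neg_atTop_atBot.comp (tendsto_id.atTop_div_const two_pos))

theorem gibbs_tight_general
    (d : ℕ) (U : EuclideanSpace ℝ (Fin d) → ℝ)
    (hUconv : ConvexOn ℝ Set.univ U)
    (hUcoer : Filter.Tendsto U (Bornology.cobounded (EuclideanSpace ℝ (Fin d))) Filter.atTop) :
    ∀ δ : ℝ, 0 < δ → ∃ K : Set (EuclideanSpace ℝ (Fin d)), IsCompact K ∧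
      ∀ ε ∈ Set.Ioc (0 : ℝ) 1, gibbs d U ε Kᶜ ≤ ENNReal.ofReal δ := by
  intro δ hδ
  have hUc : Continuous U := hUconv.locallyLipschitz.continuous
  have hUcoer' : Tendsto U (cocompact _) atTop := by rwa [← Metric.cobounded_eq_cocompact]
  obtain ⟨x₀, hx₀⟩ := hUc.exists_forall_le hUcoer'
  set m := U x₀
  obtain ⟨c, hc, C, hcC⟩ :=
    hUconv.exists_mul_one_add_norm_sub_le ⟨m, forall_mem_range.2 hx₀⟩ hUcoer
  have hfinite : ∫⁻ x, ENNReal.ofReal (Real.exp (-(U x - m) / 2)) ≠ ⊤ := by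
    simp_rw [neg_div]
    refine (lintegral_ofReal_exp_neg_lt_top volume (half_pos hc) (C := (C + m) / 2)
      fun x => ?_).ne
    linarith [hcC x]
  have hpos : volume {x | U x < m + 1} ≠ 0 :=
    (isOpen_lt hUc continuous_const).measure_ne_zero _ ⟨x₀, by simp [m]⟩
  have hbound := ENNReal.Tendsto.div_const (ENNReal.Tendsto.mul_const
    tendsto_ofReal_exp_one_sub_half_atTop (Or.inr hfinite)) (Or.inr hpos)
  rw [zero_mul, ENNReal.zero_div] at hbound
  obtain ⟨R, hRδ, hR⟩ := ((hbound.eventually (gt_mem_nhds (ENNReal.ofReal_pos.2 hδ))).and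
    (eventually_ge_atTop 1)).exists
  refine ⟨{x | U x ≤ m + R}, hUc.isCompact_sublevel hUcoer' _, fun ε hε => ?_⟩
  rw [show {x | U x ≤ m + R}ᶜ = {x | m + R < U x} by ext; simp]
  exact (gibbs_superlevel_le hUc.measurable hε hR).trans hRδ.le

/-- For `U : ℝ^d → ℝ` continuous, convex and coercive, the family of Gibbs
measures `(μ_ε)_{0 < ε ≤ 1}` is tight: for every `δ > 0` there is a compact set
`K ⊆ ℝ^d` with `μ_ε(ℝ^d \ K) ≤ δ` for all `ε ∈ (0,1]`. -/
theorem gibbs_tight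
    (d : ℕ) (U : EuclideanSpace ℝ (Fin d) → ℝ)
    (hUc : Continuous U) (hUconv : ConvexOn ℝ Set.univ U)
    (hUcoer : Filter.Tendsto U (Bornology.cobounded (EuclideanSpace ℝ (Fin d))) Filter.atTop) :
    ∀ δ : ℝ, 0 < δ → ∃ K : Set (EuclideanSpace ℝ (Fin d)), IsCompact K ∧
      ∀ ε ∈ Set.Ioc (0 : ℝ) 1, gibbs d U ε Kᶜ ≤ ENNReal.ofReal δ :=
  gibbs_tight_general d U hUconv hUcoer
end

section
/- Let U : ℝ^d → ℝ be continuous, convex, and coercive, and let m = inf_{x ∈ ℝ^d} U(x). Then for every δ > 0, the Gibbs measure of the set where U exceeds its minimum by at least δ vanishes in the small-temperature limit: μ_ε({x : U(x) ≥ m + δ}) → 0 as ε → 0. -/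
open MeasureTheory Filter

/-! Let `x₀` minimize `U` and `m = U x₀`. Convexity along rays from `x₀` turns coercivity into
linear growth: if `U ≥ m + 1` on the sphere of radius `R` about `x₀`, then
`U x ≥ m + ‖x - x₀‖ / R` outside it, so `exp (c - U)` is integrable. For `ε ≤ 1` the
unnormalised mass of `{U ≥ m + δ}` is at most `exp (-(m + δ)/ε²) ∫ exp (m + δ - U)`, while
`Z_ε ≥ exp (-(m + δ/2)/ε²) vol {U ≤ m + δ/2}`, a volume that is positive by continuity.
Hence `μ_ε {U ≥ m + δ} = O(exp (-δ / (2 ε²)))`. -/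

open Set Real Topology

section NormedSpace

variable {E : Type*} [NormedAddCommGroup E] [NormedSpace ℝ E]

theorem ConvexOn.add_mul_div_le_of_norm_sub_eq {U : E → ℝ} (hU : ConvexOn ℝ univ U) {x₀ : E}
    {R c : ℝ} (hR : 0 < R) (hsphere : ∀ y, ‖y - x₀‖ = R → U x₀ + c ≤ U y) {x : E}
    (hx : R ≤ ‖x - x₀‖) : U x₀ + c * (‖x - x₀‖ / R) ≤ U x := by
  set n := ‖x - x₀‖
  have hn : 0 < n := hR.trans_le hx
  set t := R / n
  have ht : 0 < t := div_pos hR hn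
  have htn : t * n = R := div_mul_cancel₀ R hn.ne'
  have hy : ‖((1 - t) • x₀ + t • x) - x₀‖ = R := by
    rw [show (1 - t) • x₀ + t • x - x₀ = t • (x - x₀) by module, norm_smul,
      Real.norm_eq_abs, abs_of_pos ht, htn]
  have hconv : U ((1 - t) • x₀ + t • x) ≤ (1 - t) * U x₀ + t * U x :=
    hU.2 (mem_univ x₀) (mem_univ x) (sub_nonneg.2 ((div_le_one hn).2 hx)) ht.le (by ring)
  have hc : c ≤ t * (U x - U x₀) := by linarith [hsphere _ hy]
  have hgap : c * (n / R) ≤ U x - U x₀ := by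
    calc c * (n / R) ≤ t * (U x - U x₀) * (n / R) := by gcongr
      _ = (U x - U x₀) * (t * n / R) := by ring
      _ = U x - U x₀ := by rw [htn, div_self hR.ne', mul_one]
  linarith

theorem ConvexOn.exists_add_mul_norm_le {U : E → ℝ} (hU : ConvexOn ℝ univ U) {x₀ : E}
    (hmin : ∀ y, U x₀ ≤ U y) (hcoer : Tendsto U (Bornology.cobounded E) atTop) :
    ∃ a b : ℝ, 0 < b ∧ ∀ x, a + b * ‖x‖ ≤ U x := by
  obtain ⟨r, -, hr⟩ := (Metric.hasBasis_cobounded_compl_closedBall x₀).eventually_iff.1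
    (hcoer.eventually_ge_atTop (U x₀ + 1))
  set R := max r 0 + 1
  have hR : 0 < R := by positivity
  have hsphere : ∀ y, ‖y - x₀‖ = R → U x₀ + 1 ≤ U y := fun y hy ↦
    hr (by rw [mem_compl_iff, Metric.mem_closedBall, dist_eq_norm, hy, not_le]
           exact (le_max_left r 0).trans_lt (lt_add_one _))
  refine ⟨U x₀ - 1 - ‖x₀‖ / R, 1 / R, by positivity, fun x ↦ ?_⟩
  have hnear : U x₀ - 1 + ‖x - x₀‖ / R ≤ U x := by
    rcases le_total ‖x - x₀‖ R with hle | hle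
    · linarith [hmin x, div_le_one_of_le₀ hle hR.le]
    · linarith [hU.add_mul_div_le_of_norm_sub_eq hR hsphere hle]
  have htri : ‖x‖ / R ≤ ‖x - x₀‖ / R + ‖x₀‖ / R := by
    rw [← add_div]; gcongr; exact norm_le_norm_sub_add x x₀
  linarith [show 1 / R * ‖x‖ = ‖x‖ / R by ring]

variable [FiniteDimensional ℝ E] [MeasurableSpace E] [BorelSpace E] (μ : Measure E)
  [μ.IsAddHaarMeasure]

theorem integrable_exp_neg_mul_norm {b : ℝ} (hb : 0 < b) :
    Integrable (fun x : E ↦ exp (-(b * ‖x‖))) μ := by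
  cases subsingleton_or_nontrivial E
  · exact (integrable_const 1).congr (.of_forall fun x ↦ by simp [Subsingleton.elim x 0])
  rw [integrable_fun_norm_addHaar μ (f := fun y ↦ exp (-(b * y)))]
  refine (integrableOn_rpow_mul_exp_neg_mul_rpow (s := (Module.finrank ℝ E - 1 : ℕ)) (p := 1)
    (by linarith [(Module.finrank ℝ E - 1 : ℕ).cast_nonneg (α := ℝ)]) one_pos hb).congr_fun
    (fun y _ ↦ by simp [Real.rpow_natCast]) measurableSet_Ioi

theorem integrable_exp_sub_of_add_mul_norm_le {U : E → ℝ} (hU : Continuous U) {a b : ℝ}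
    (hb : 0 < b) (hgrowth : ∀ x, a + b * ‖x‖ ≤ U x) (c : ℝ) :
    Integrable (fun x ↦ exp (c - U x)) μ := by
  refine ((integrable_exp_neg_mul_norm μ hb).const_mul (exp (c - a))).mono' (by fun_prop)
    (.of_forall fun x ↦ ?_)
  rw [Real.norm_of_nonneg (exp_pos _).le, ← exp_add]
  exact exp_le_exp.2 (by linarith [hgrowth x])

end NormedSpace

section Laplace

variable {α : Type*} [MeasurableSpace α] (μ : Measure α) {U : α → ℝ}

theorem ofReal_exp_mul_measure_le_lintegral (hU : Measurable U) (a ε : ℝ) :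
    ENNReal.ofReal (exp (-a / ε ^ 2)) * μ {x | U x ≤ a} ≤
      ∫⁻ x, ENNReal.ofReal (exp (-U x / ε ^ 2)) ∂μ :=
  (mul_le_mul_right (measure_mono fun x (hx : U x ≤ a) ↦
    ENNReal.ofReal_le_ofReal (exp_le_exp.2 (by gcongr))) _).trans
    (mul_meas_ge_le_lintegral₀ (by fun_prop) _)

theorem setLIntegral_exp_le_ofReal_exp_mul (hU : Measurable U) (c : ℝ) {ε : ℝ} (hε0 : 0 < ε)
    (hε1 : ε ≤ 1) :
    ∫⁻ x in {x | c ≤ U x}, ENNReal.ofReal (exp (-U x / ε ^ 2)) ∂μ ≤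
      ENNReal.ofReal (exp (-c / ε ^ 2)) * ∫⁻ x, ENNReal.ofReal (exp (c - U x)) ∂μ := by
  have hε2 : 1 ≤ 1 / ε ^ 2 := by rw [le_div_iff₀ (by positivity)]; nlinarith
  rw [← lintegral_const_mul _ (by fun_prop)]
  refine (setLIntegral_mono (by fun_prop) fun x hx ↦ ?_).trans (setLIntegral_le_lintegral _ _)
  rw [← ENNReal.ofReal_mul (exp_pos _).le, ← exp_add]
  refine ENNReal.ofReal_le_ofReal (exp_le_exp.2 ?_)
  have : (U x - c) * 1 ≤ (U x - c) * (1 / ε ^ 2) := by gcongr; exact sub_nonneg.2 hx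
  calc -U x / ε ^ 2 = -c / ε ^ 2 - (U x - c) * (1 / ε ^ 2) := by ring
    _ ≤ -c / ε ^ 2 + (c - U x) := by linarith

end Laplace

theorem gibbs_setOf_le_le {d : ℕ} {U : EuclideanSpace ℝ (Fin d) → ℝ} (hU : Measurable U)
    (a c : ℝ) {ε : ℝ} (hε0 : 0 < ε) (hε1 : ε ≤ 1) :
    gibbs d U ε {x | c ≤ U x} ≤ (volume {x | U x ≤ a})⁻¹ *
      (∫⁻ x, ENNReal.ofReal (exp (c - U x))) * ENNReal.ofReal (exp (-((c - a) / ε ^ 2))) := by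
  rw [gibbs, Measure.smul_apply, smul_eq_mul,
    withDensity_apply _ (measurableSet_le measurable_const hU)]
  have ha : ENNReal.ofReal (exp (-a / ε ^ 2)) ≠ 0 := (ENNReal.ofReal_pos.2 (exp_pos _)).ne'
  calc _ ≤ (ENNReal.ofReal (exp (-a / ε ^ 2)) * volume {x | U x ≤ a})⁻¹ *
        (ENNReal.ofReal (exp (-c / ε ^ 2)) * ∫⁻ x, ENNReal.ofReal (exp (c - U x))) :=
      mul_le_mul' (ENNReal.inv_le_inv' (ofReal_exp_mul_measure_le_lintegral _ hU a ε))
        (setLIntegral_exp_le_ofReal_exp_mul _ hU c hε0 hε1)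
    _ = _ := by
      rw [ENNReal.mul_inv (.inl ha) (.inl ENNReal.ofReal_ne_top),
        ← ENNReal.ofReal_inv_of_pos (exp_pos _), ← exp_neg,
        show -((c - a) / ε ^ 2) = -(-a / ε ^ 2) + -c / ε ^ 2 by ring, exp_add,
        ENNReal.ofReal_mul (exp_pos _).le]
      ring

theorem tendsto_ofReal_exp_neg_div_sq {c : ℝ} (hc : 0 < c) :
    Tendsto (fun ε : ℝ ↦ ENNReal.ofReal (exp (-(c / ε ^ 2)))) (𝓝[>] 0) (𝓝 0) := by
  have hsq : Tendsto (fun ε : ℝ ↦ c / ε ^ 2) (𝓝[>] 0) atTop := by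
    simpa only [Function.comp_def, div_eq_mul_inv, inv_pow] using
      ((tendsto_pow_atTop two_ne_zero).comp tendsto_inv_nhdsGT_zero).const_mul_atTop hc
  simpa only [Function.comp_def, ENNReal.ofReal_zero] using
    (ENNReal.continuous_ofReal.tendsto 0).comp (tendsto_exp_neg_atTop_nhds_zero.comp hsq)

/-- For `U : ℝ^d → ℝ` continuous, convex and coercive, with `m = inf U`,
the Gibbs mass of `{x : U x ≥ m + δ}` vanishes as `ε → 0⁺`, for every `δ > 0`. -/
theorem gibbs_measure_above_min_tendsto_zero
    (d : ℕ) (U : EuclideanSpace ℝ (Fin d) → ℝ)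
    (hUc : Continuous U) (hUconv : ConvexOn ℝ Set.univ U)
    (hUcoer : Filter.Tendsto U (Bornology.cobounded (EuclideanSpace ℝ (Fin d))) Filter.atTop)
    (δ : ℝ) (hδ : 0 < δ) :
    Filter.Tendsto
      (fun ε => gibbs d U ε {x : EuclideanSpace ℝ (Fin d) | (⨅ y, U y) + δ ≤ U x})
      (nhdsWithin 0 (Set.Ioi 0)) (nhds 0) := by
  obtain ⟨x₀, hmin⟩ := hUc.exists_forall_le
    (Metric.cobounded_eq_cocompact (α := EuclideanSpace ℝ (Fin d)) ▸ hUcoer)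
  have hinf : (⨅ y, U y) = U x₀ :=
    le_antisymm (ciInf_le ⟨U x₀, forall_mem_range.2 hmin⟩ x₀) (le_ciInf hmin)
  obtain ⟨a, b, hb, hgrowth⟩ := hUconv.exists_add_mul_norm_le hmin hUcoer
  have hC : ∫⁻ x, ENNReal.ofReal (exp (U x₀ + δ - U x)) ≠ ⊤ :=
    (integrable_exp_sub_of_add_mul_norm_le volume hUc hb hgrowth _).lintegral_lt_top.ne
  have hV : volume {x | U x ≤ U x₀ + δ / 2} ≠ 0 := fun h ↦
    (isOpen_lt hUc continuous_const).measure_ne_zero volume ⟨x₀, by simpa using half_pos hδ⟩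
      (measure_mono_null (fun x (hx : U x < _) ↦ hx.le) h)
  have hbound := ENNReal.Tendsto.const_mul (tendsto_ofReal_exp_neg_div_sq (half_pos hδ))
    (.inr (ENNReal.mul_ne_top (ENNReal.inv_ne_top.2 hV) hC))
  rw [mul_zero] at hbound
  rw [hinf]
  refine tendsto_of_tendsto_of_tendsto_of_le_of_le' tendsto_const_nhds hbound
    (.of_forall fun _ ↦ zero_le) ?_
  filter_upwards [Ioc_mem_nhdsGT one_pos] with ε ⟨hε0, hε1⟩
  have hgibbs := gibbs_setOf_le_le hUc.measurable (U x₀ + δ / 2) (U x₀ + δ) hε0 hε1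
  rwa [show U x₀ + δ - (U x₀ + δ / 2) = δ / 2 by ring] at hgibbs
end
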